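/- Let G be a finite abelian group with |G| ≥ 3 and suppose there exists a nice zero-sum sequence over G that is a product of 2k*+1 atoms of length D*(G). If moreover D(G) = D*(G), then for every k ≥ k*, ρ_{2k+1}(G) = k·D(G) + ⌊D(G)/2⌋. -/

import Mathlib

open scoped Pointwise

section Defs

variable (G : Type*) [AddCommGroup G]

/-- `S` is a minimal zero-sum sequence (an atom of the monoid `B(G)` of zero-sum
sequences): it is nonempty, has sum zero, and no proper nonempty subsequence has sum zero. -/
def IsMinZS (S : Multiset G) : Prop :=
  S ≠ 0 ∧ S.sum = 0 ∧ ∀ T : Multiset G, T ≤ S → T ≠ 0 → T ≠ S → T.sum ≠ 0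

/-- `S` is a product of `k` atoms of `B(G)`. -/
def IsProdOfAtoms (k : ℕ) (S : Multiset G) : Prop :=
  ∃ L : Multiset (Multiset G), Multiset.card L = k ∧ (∀ U ∈ L, IsMinZS G U) ∧ L.sum = S

/-- `S` is a product of atoms of length `2`. -/
def IsProd2Atoms (S : Multiset G) : Prop :=
  ∃ L : Multiset (Multiset G), (∀ U ∈ L, IsMinZS G U ∧ Multiset.card U = 2) ∧ L.sum = S

/-- The set of lengths of `A` in `B(G)`. -/
def LSet (A : Multiset G) : Set ℕ := { k | IsProdOfAtoms G k A }

/-- `U_k(G)`: the set of `m` such that some product of `k` atoms equals a product of `m` atoms. -/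
def UkSet (k : ℕ) : Set ℕ :=
  { m | ∃ S : Multiset G, IsProdOfAtoms G k S ∧ IsProdOfAtoms G m S }

/-- `ρ_k(G) = sup U_k(G)`. -/
noncomputable def rho (k : ℕ) : ℕ := sSup (UkSet G k)

/-- The Davenport constant `D(G)`: the maximal length of a minimal zero-sum sequence. -/
noncomputable def Dav : ℕ :=
  sSup { n : ℕ | ∃ S : Multiset G, IsMinZS G S ∧ Multiset.card S = n }

/-- `A` is pair-nice with factorization into `2k` atoms of length `d` (where `d` plays
the role of `D^*(G)`). -/
def PairNiceWith (d k : ℕ) (A : Multiset G) : Prop :=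
  1 ≤ k ∧ ∃ (U : Fin (2 * k) → Multiset G) (g : Fin (2 * k) → G),
    (∀ i, IsMinZS G (U i) ∧ Multiset.card (U i) = d) ∧
    (∑ i, U i) = A ∧ (∀ i, g i ∈ U i) ∧
    IsProd2Atoms G (∑ i, ({g i} : Multiset G))

/-- `A` is pair-nice (with respect to `G`, with `d = D^*(G)`). -/
def PairNice (d : ℕ) (A : Multiset G) : Prop := ∃ k, PairNiceWith G d k A

/-- `A` is nice with factorization into `2k+1` atoms of length `d` (where `d` plays the
role of `D^*(G)`), as in Definition 3.1 of the paper. -/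
def NiceWith [DecidableEq G] (d k : ℕ) (A : Multiset G) : Prop :=
  1 ≤ k ∧ ∃ (U : Fin (2 * k + 1) → Multiset G) (g : Fin (2 * k + 1) → G),
    (∀ i, IsMinZS G (U i) ∧ Multiset.card (U i) = d) ∧
    (∑ i, U i) = A ∧ (∀ i, g i ∈ U i) ∧
    ((Odd d ∧ IsProd2Atoms G (A - ∑ i, ({g i} : Multiset G)) ∧
        ∃ W : Fin k → Multiset G, (∀ j, IsMinZS G (W j)) ∧
          (∀ j : Fin k, Multiset.card (W j) = if (j : ℕ) = 0 then 3 else 2) ∧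
          (∑ j, W j) = ∑ i, ({g i} : Multiset G)) ∨
      (Even d ∧ ∃ h : G, h ∈ A - ∑ i, ({g i} : Multiset G) ∧
        IsProd2Atoms G (A - ((∑ i, ({g i} : Multiset G)) + {h})) ∧
        IsProd2Atoms G ((∑ i, ({g i} : Multiset G)) + {h})))

/-- `A` is nice (with respect to `G`, with `d = D^*(G)`). -/
def Nice [DecidableEq G] (d : ℕ) (A : Multiset G) : Prop := ∃ k, NiceWith G d k A

end Defs

section MonoidDefs

variable (H : Type*) [CommMonoid H]

/-- `U_k(H)` for a monoid `H`: the set of `m` such that some product of `k` irreducible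
elements (atoms) of `H` equals a product of `m` atoms. -/
def UkM (k : ℕ) : Set ℕ :=
  { m | ∃ L L' : Multiset H, Multiset.card L = k ∧ Multiset.card L' = m ∧
      (∀ u ∈ L, Irreducible u) ∧ (∀ v ∈ L', Irreducible v) ∧ L.prod = L'.prod }

/-- `ρ_k(H) = sup U_k(H)`. -/
noncomputable def rhoM (k : ℕ) : ℕ := sSup (UkM H k)

end MonoidDefs

/-!
In any factorization of a zero-sum sequence `S` the atoms `0` are exactly the `t` zeros of
`S`, and every other atom has length between `2` and `D(G)`. So a factorization into
`m` atoms has `2m ≤ |S| + t`, one into `j` atoms has `|S| + (D(G) - 1) t ≤ j D(G)`, and for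
`D(G) ≥ 2` these give `2m ≤ j D(G)`, i.e. `ρ_{2k+1}(G) ≤ k D(G) + ⌊D(G)/2⌋`.

For a nice `A = U_1 ⋯ U_{2k*+1}` with `|U_i| = D(G)`, the remainder after removing the chosen
elements `g_i` factors into atoms of length `2`, and the `g_i` themselves into `k*` atoms (odd
case) or, together with one more element, into atoms of length `2` (even case); counting
lengths, this is a factorization of `A` into `k* D(G) + ⌊D(G)/2⌋` atoms. Multiplying by
`(U_1 (-U_1))^{k - k*}`, a product of `2(k - k*)` and of `(k - k*) D(G)` atoms, attains the
bound for every `k ≥ k*`.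
-/

open Multiset

namespace Multiset

theorem card_multiset_sum {α : Type*} (L : Multiset (Multiset α)) :
    card L.sum = (L.map card).sum := by
  simpa using map_multiset_sum cardHom L

theorem count_multiset_sum {α : Type*} [DecidableEq α] (a : α) (L : Multiset (Multiset α)) :
    count a L.sum = (L.map (count a)).sum := by
  simpa using count_sum (m := L) (f := id) (a := a)

end Multiset

section Atoms

variable {G : Type*} [AddCommGroup G]

namespace IsMinZS

variable {S : Multiset G}

theorem eq_singleton_zero_of_mem (hS : IsMinZS G S) (h0 : (0 : G) ∈ S) : S = {0} := by
  by_contra hne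
  exact hS.2.2 {0} (singleton_le.mpr h0) (by simp) (Ne.symm hne) (by simp)

theorem two_le_card_of_ne_singleton_zero (hS : IsMinZS G S) (hne : S ≠ {0}) : 2 ≤ card S := by
  have hpos : 0 < card S := card_pos.mpr hS.1
  by_contra! h
  obtain ⟨x, rfl⟩ := card_eq_one.mp (by omega : card S = 1)
  have hx : x = 0 := by simpa using hS.2.1
  exact hne (by rw [hx])

theorem two_le_card_add_count_zero [DecidableEq G] (hS : IsMinZS G S) :
    2 ≤ card S + count 0 S := by
  by_cases h0 : (0 : G) ∈ S
  · simp [hS.eq_singleton_zero_of_mem h0]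
  · have hne : S ≠ {0} := fun h => h0 (by simp [h])
    exact (hS.two_le_card_of_ne_singleton_zero hne).trans (Nat.le_add_right _ _)

/-- `Dav G` is the junk value `0` when the lengths of atoms are unbounded. -/
theorem card_le_dav (hD : 0 < Dav G) (hS : IsMinZS G S) : card S ≤ Dav G := by
  have hbdd : BddAbove {n | ∃ S : Multiset G, IsMinZS G S ∧ card S = n} := by
    by_contra h
    exact hD.ne' (Nat.sSup_of_not_bddAbove h)
  exact le_csSup hbdd ⟨S, hS, rfl⟩

theorem card_add_count_zero_le [DecidableEq G] (hD : 0 < Dav G) (hS : IsMinZS G S) :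
    card S + (Dav G - 1) * count 0 S ≤ Dav G := by
  by_cases h0 : (0 : G) ∈ S
  · rw [hS.eq_singleton_zero_of_mem h0]
    simp only [card_singleton, count_singleton_self]
    omega
  · simpa [count_eq_zero_of_notMem h0] using hS.card_le_dav hD

theorem map_neg (hS : IsMinZS G S) : IsMinZS G (S.map Neg.neg) := by
  obtain ⟨hne, hsum, hmin⟩ := hS
  refine ⟨by simpa using hne, by rw [sum_map_neg', hsum, neg_zero], ?_⟩
  intro T hT hT0 hTS hTsum
  have hnegT : T.map Neg.neg ≤ S := by simpa using map_le_map (f := Neg.neg) hT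
  refine hmin _ hnegT (by simpa using hT0) (fun h => hTS ?_) (by rw [sum_map_neg', hTsum, neg_zero])
  simpa using congrArg (map Neg.neg) h

end IsMinZS

theorem isMinZS_pair_neg {g : G} (hg : g ≠ 0) : IsMinZS G {g, -g} := by
  refine ⟨by simp, by simp, fun T hT hT0 hTS => ?_⟩
  have hcard : card T = 1 := by
    have h2 : card T ≤ 2 := by simpa using card_le_card hT
    have h2' : card T ≠ 2 := fun h => hTS (eq_of_le_of_card_le hT (by simp [h]))
    have := card_pos.mpr hT0
    omega
  obtain ⟨x, rfl⟩ := card_eq_one.mp hcard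
  have hx : x = g ∨ x = -g := by simpa using mem_of_le hT (mem_singleton_self x)
  rcases hx with rfl | rfl <;> simpa using hg

namespace IsProdOfAtoms

variable {S S' : Multiset G} {k m : ℕ}

theorem add (h : IsProdOfAtoms G k S) (h' : IsProdOfAtoms G m S') :
    IsProdOfAtoms G (k + m) (S + S') := by
  obtain ⟨L, hc, ha, hs⟩ := h
  obtain ⟨L', hc', ha', hs'⟩ := h'
  refine ⟨L + L', by simp [hc, hc'], fun U hU => ?_, by simp [hs, hs']⟩
  rcases mem_add.mp hU with hU | hU
  exacts [ha U hU, ha' U hU]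

theorem nsmul (h : IsProdOfAtoms G k S) (n : ℕ) : IsProdOfAtoms G (n * k) (n • S) := by
  obtain ⟨L, hc, ha, hs⟩ := h
  exact ⟨n • L, by simp [hc], fun U hU => ha U (mem_nsmul.mp hU).2, by rw [sum_nsmul, hs]⟩

theorem two_mul_le_card_add_count_zero [DecidableEq G] (h : IsProdOfAtoms G m S) :
    2 * m ≤ card S + count 0 S := by
  obtain ⟨L, rfl, ha, rfl⟩ := h
  rw [card_multiset_sum, count_multiset_sum, ← sum_map_add]
  calc 2 * card L = (L.map fun _ => 2).sum := by simp [mul_comm]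
    _ ≤ _ := sum_map_le_sum_map _ _ fun U hU => (ha U hU).two_le_card_add_count_zero

theorem card_add_count_zero_le [DecidableEq G] (hD : 0 < Dav G) (h : IsProdOfAtoms G k S) :
    card S + (Dav G - 1) * count 0 S ≤ k * Dav G := by
  obtain ⟨L, rfl, ha, rfl⟩ := h
  rw [card_multiset_sum, count_multiset_sum, ← sum_map_mul_left, ← sum_map_add]
  calc _ ≤ (L.map fun _ => Dav G).sum :=
        sum_map_le_sum_map _ _ fun U hU => (ha U hU).card_add_count_zero_le hD
    _ = card L * Dav G := by simp

end IsProdOfAtoms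

theorem IsProd2Atoms.exists_isProdOfAtoms {S : Multiset G} (h : IsProd2Atoms G S) :
    ∃ m, 2 * m = card S ∧ IsProdOfAtoms G m S := by
  obtain ⟨L, hL, rfl⟩ := h
  refine ⟨card L, ?_, L, rfl, fun U hU => (hL U hU).1, rfl⟩
  rw [card_multiset_sum, map_congr rfl fun U hU => (hL U hU).2]
  simp [mul_comm]

theorem IsProdOfAtoms.add_of_isProd2Atoms_tsub [DecidableEq G] {S T : Multiset G} {k : ℕ}
    (hT : IsProdOfAtoms G k T) (hTS : T ≤ S) (h : IsProd2Atoms G (S - T)) :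
    ∃ m, 2 * m + card T = card S ∧ IsProdOfAtoms G (m + k) S := by
  obtain ⟨m, hm, hrest⟩ := h.exists_isProdOfAtoms
  refine ⟨m, by rw [hm, card_sub hTS, Nat.sub_add_cancel (card_le_card hTS)], ?_⟩
  simpa [tsub_add_cancel_of_le hTS] using hrest.add hT

theorem isProdOfAtoms_two_add_map_neg {V : Multiset G} (hV : IsMinZS G V) :
    IsProdOfAtoms G 2 (V + V.map Neg.neg) :=
  ⟨{V, V.map Neg.neg}, rfl, by simpa using ⟨hV, hV.map_neg⟩, by simp⟩

theorem isProdOfAtoms_card_add_map_neg {V : Multiset G} (hV : ∀ x ∈ V, x ≠ 0) :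
    IsProdOfAtoms G (card V) (V + V.map Neg.neg) := by
  refine ⟨V.map fun x => {x, -x}, by simp, ?_, ?_⟩
  · simp only [mem_map]
    rintro _ ⟨x, hx, rfl⟩
    exact isMinZS_pair_neg (hV x hx)
  · have hpair : ∀ x : G, ({x, -x} : Multiset G) = {x} + {-x} := fun x => rfl
    simp only [hpair, sum_map_add, sum_map_singleton]
    rw [show (fun x : G => ({-x} : Multiset G)) = (fun y => {y}) ∘ Neg.neg from rfl, ← map_map,
      sum_map_singleton]

end Atoms

section Elasticities

variable {G : Type*} [AddCommGroup G]

theorem two_mul_le_of_mem_UkSet {j m : ℕ} (hD : 2 ≤ Dav G) (hm : m ∈ UkSet G j) :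
    2 * m ≤ j * Dav G := by
  classical
  obtain ⟨S, hj, hm⟩ := hm
  have hlong := hm.two_mul_le_card_add_count_zero
  have hshort := hj.card_add_count_zero_le (by omega)
  have hzeros : count 0 S ≤ (Dav G - 1) * count 0 S := Nat.le_mul_of_pos_left _ (by omega)
  omega

theorem le_of_mem_UkSet_two_mul_add_one {k m : ℕ} (hD : 2 ≤ Dav G)
    (hm : m ∈ UkSet G (2 * k + 1)) : m ≤ k * Dav G + Dav G / 2 := by
  have h := two_mul_le_of_mem_UkSet hD hm
  have : (2 * k + 1) * Dav G = 2 * (k * Dav G) + Dav G := by ring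
  omega

theorem add_mem_UkSet {j m : ℕ} (hm : m ∈ UkSet G j) {V : Multiset G} (hV : IsMinZS G V)
    (hV2 : 2 ≤ card V) (n : ℕ) : m + n * card V ∈ UkSet G (j + n * 2) := by
  obtain ⟨S, hj, hm⟩ := hm
  have hV0 : ∀ x ∈ V, x ≠ 0 := by
    rintro x hx rfl
    simp [hV.eq_singleton_zero_of_mem hx] at hV2
  exact ⟨S + n • (V + V.map Neg.neg), hj.add ((isProdOfAtoms_two_add_map_neg hV).nsmul n),
    hm.add ((isProdOfAtoms_card_add_map_neg hV0).nsmul n)⟩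

end Elasticities

namespace NiceWith

variable {G : Type*} [AddCommGroup G] [DecidableEq G] {d k : ℕ} {A : Multiset G}

theorem exists_atom (hA : NiceWith G d k A) : ∃ V, IsMinZS G V ∧ card V = d :=
  let ⟨_, U, _, hU, _⟩ := hA
  ⟨U 0, hU 0⟩

theorem two_le (hA : NiceWith G d k A) (hDD : Dav G = d) : 2 ≤ d := by
  obtain ⟨V, hV, rfl⟩ := hA.exists_atom
  have hpos : 0 < card V := card_pos.mpr hV.1
  obtain ⟨hk, -, -, -, -, -, ⟨-, -, W, hW, hWcard, -⟩ | ⟨heven, -⟩⟩ := hA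
  · have h3 := (hW ⟨0, hk⟩).card_le_dav (hDD ▸ hpos)
    rw [hWcard, if_pos rfl, hDD] at h3
    omega
  · obtain ⟨c, hc⟩ := heven
    omega

theorem isProdOfAtoms (hA : NiceWith G d k A) : IsProdOfAtoms G (2 * k + 1) A := by
  obtain ⟨-, U, -, hU, rfl, -⟩ := hA
  refine ⟨Finset.univ.val.map U, by simp, fun V hV => ?_, rfl⟩
  obtain ⟨i, -, rfl⟩ := mem_map.mp hV
  exact (hU i).1

theorem isProdOfAtoms_mul_add_div (hA : NiceWith G d k A) :
    IsProdOfAtoms G (k * d + d / 2) A := by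
  obtain ⟨-, U, g, hU, rfl, hg, hsplit⟩ := hA
  set B := ∑ i, ({g i} : Multiset G)
  have hBA : B ≤ ∑ i, U i := Finset.sum_le_sum fun i _ => singleton_le.mpr (hg i)
  have hcardA : card (∑ i, U i) = 2 * (k * d) + d := by
    rw [Multiset.card_sum, Finset.sum_congr rfl fun i _ => (hU i).2, Finset.sum_const,
      Finset.card_univ, Fintype.card_fin, smul_eq_mul]
    ring
  have hcardB : card B = 2 * k + 1 := by simp [B]
  rcases hsplit with ⟨hodd, hrest, W, hW, -, hWsum⟩ | ⟨heven, h, hh, hrest, hBh⟩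
  · have hB : IsProdOfAtoms G k B :=
      ⟨Finset.univ.val.map W, by simp, by simpa using hW, by rw [← hWsum]; rfl⟩
    obtain ⟨m, hm, hfact⟩ := hB.add_of_isProd2Atoms_tsub hBA hrest
    rw [hcardA, hcardB] at hm
    have := Nat.odd_iff.mp hodd
    convert hfact using 1
    omega
  · have hBhA : B + {h} ≤ ∑ i, U i := (le_tsub_iff_left hBA).mp (singleton_le.mpr hh)
    obtain ⟨m', hm', hBh⟩ := hBh.exists_isProdOfAtoms
    obtain ⟨m, hm, hfact⟩ := hBh.add_of_isProd2Atoms_tsub hBhA hrest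
    rw [card_add, hcardB] at hm hm'
    rw [hcardA] at hm
    have := Nat.even_iff.mp heven
    convert hfact using 1
    omega

theorem mem_UkSet (hA : NiceWith G d k A) (hd : 2 ≤ d) (n : ℕ) :
    (k + n) * d + d / 2 ∈ UkSet G (2 * (k + n) + 1) := by
  obtain ⟨V, hV, hVcard⟩ := hA.exists_atom
  have h := add_mem_UkSet ⟨A, hA.isProdOfAtoms, hA.isProdOfAtoms_mul_add_div⟩ hV
    (hVcard ▸ hd) n
  rwa [hVcard, show k * d + d / 2 + n * d = (k + n) * d + d / 2 by ring,
    show 2 * k + 1 + n * 2 = 2 * (k + n) + 1 by ring] at h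

end NiceWith

theorem stmt15_general (G : Type*) [AddCommGroup G] [DecidableEq G]
    (d : ℕ)
    (kstar : ℕ) (A : Multiset G) (hA : NiceWith G d kstar A)
    (hDD : Dav G = d) :
    ∀ k : ℕ, kstar ≤ k → rho G (2 * k + 1) = k * Dav G + Dav G / 2 := by
  intro k hk
  obtain ⟨n, rfl⟩ := Nat.exists_eq_add_of_le hk
  have hd : 2 ≤ d := hA.two_le hDD
  subst hDD
  exact IsGreatest.csSup_eq
    ⟨hA.mem_UkSet hd n, fun m hm => le_of_mem_UkSet_two_mul_add_one hd hm⟩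

/-- If `|G| ≥ 3`, there is a nice zero-sum sequence which is a product of
`2k*+1` atoms of length `D^*(G)`, and `D(G) = D^*(G)`, then for every `k ≥ k*`,
`ρ_{2k+1}(G) = k·D(G) + ⌊D(G)/2⌋`. -/
theorem stmt15 (G : Type*) [AddCommGroup G] [DecidableEq G] [Fintype G] (hG : 3 ≤ Fintype.card G)
    (r : ℕ) (n : Fin r → ℕ)
    (h1 : ∀ i, 1 < n i) (hdvd : ∀ i j : Fin r, i ≤ j → n i ∣ n j)
    (e : G ≃+ ((i : Fin r) → ZMod (n i)))
    (d : ℕ) (hd : d = 1 + ∑ i, (n i - 1))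
    (kstar : ℕ) (A : Multiset G) (hA : NiceWith G d kstar A)
    (hDD : Dav G = d) :
    ∀ k : ℕ, kstar ≤ k → rho G (2 * k + 1) = k * Dav G + Dav G / 2 :=
  stmt15_general G d kstar A hA hDD
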